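/- Let D ⊆ ℝ³ be a connected open set and u : D → ℝ³ a C¹ vector field with Du = (∇u + (∇u)ᵀ)/2 = 0 on D. Then there exist η, ω ∈ ℝ³ such that u(x) = η + ω × x for all x ∈ D. -/

import Mathlib

/-!
Skewness of `Du` gives `⟪Du(z) d, d⟫ = 0`, so integrating along segments shows
`⟪u y - u x, y - x⟫ = 0` on every ball inside `D`. Differentiating this identity in `y` and using
skewness once more gives `u y - u x = Du(y) (y - x)`: near each point `u` agrees with an affine
map, so `Du` is locally constant (no second derivatives of the `C¹` field are needed). On the
connected set `D` it is then a single skew map `A`, `u` is `A + η` there, and a skew map of `ℝ³`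
is `x ↦ ω × x`.
-/

open Matrix Filter Topology

theorem LinearMap.isSkewAdjoint_dotProductBilin_iff {R ι : Type*} [CommRing R] [Fintype ι]
    [DecidableEq ι] {L : (ι → R) →ₗ[R] ι → R} :
    IsSkewAdjoint (dotProductBilin R R) L ↔
      ∀ i j, L (Pi.single j 1) i + L (Pi.single i 1) j = 0 := by
  constructor
  · intro h i j
    simpa [IsSkewAdjoint, IsAdjointPair, dotProduct_single_one, single_one_dotProduct,
      eq_neg_iff_add_eq_zero] using h (Pi.single j 1) (Pi.single i 1)
  · intro h v w
    have hM : (toMatrix' L)ᵀ = -toMatrix' L := by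
      ext i j
      exact eq_neg_of_add_eq_zero_left (h j i)
    simp only [dotProductBilin_apply_apply, Pi.neg_apply, dotProduct_neg]
    rw [← toMatrix'_mulVec L v, ← toMatrix'_mulVec L w, dotProduct_comm, dotProduct_mulVec,
      ← vecMul_transpose, hM, vecMul_neg, dotProduct_neg, neg_neg, dotProduct_comm]

theorem LinearMap.IsSkewAdjoint.apply_dotProduct {R ι : Type*} [CommRing R] [Fintype ι]
    {L : (ι → R) → ι → R} (hL : IsSkewAdjoint (dotProductBilin R R) L) (v w : ι → R) :
    L v ⬝ᵥ w = -(L w ⬝ᵥ v) := by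
  simpa [dotProduct_comm v] using hL v w

theorem LinearMap.IsSkewAdjoint.exists_eq_cross {L : (Fin 3 → ℝ) →ₗ[ℝ] Fin 3 → ℝ}
    (hL : IsSkewAdjoint (dotProductBilin ℝ ℝ) L) : ∃ ω, ∀ z, L z = ω ⨯₃ z := by
  have h := LinearMap.isSkewAdjoint_dotProductBilin_iff.1 hL
  refine ⟨![L (Pi.single 1 1) 2, L (Pi.single 2 1) 0, L (Pi.single 0 1) 1], fun z => ?_⟩
  rw [← toMatrix'_mulVec L]
  ext i
  fin_cases i <;>
    simp only [mulVec, dotProduct, toMatrix'_apply, Fin.sum_univ_three, cross_apply,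
      Fin.zero_eta, Fin.mk_one, Fin.reduceFinMk, Fin.isValue, cons_val_zero, cons_val_one,
      cons_val]
  · linear_combination (z 0 / 2) * h 0 0 + z 1 * h 0 1
  · linear_combination (z 1 / 2) * h 1 1 + z 2 * h 1 2
  · linear_combination z 0 * h 0 2 + (z 2 / 2) * h 2 2

theorem HasDerivAt.dotProduct {𝕜 ι : Type*} [NontriviallyNormedField 𝕜] [Fintype ι]
    {f g : 𝕜 → ι → 𝕜} {f' g' : ι → 𝕜} {t : 𝕜} (hf : HasDerivAt f f' t)
    (hg : HasDerivAt g g' t) :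
    HasDerivAt (fun s => f s ⬝ᵥ g s) (f' ⬝ᵥ g t + f t ⬝ᵥ g') t := by
  unfold _root_.dotProduct
  simpa only [Finset.sum_add_distrib] using HasDerivAt.fun_sum (u := Finset.univ) fun i _ =>
    (hasDerivAt_pi.1 hf i).fun_mul (hasDerivAt_pi.1 hg i)

section KillingField

variable {ι : Type*} [Fintype ι] {u : (ι → ℝ) → ι → ℝ} {s : Set (ι → ℝ)}

theorem Convex.sub_dotProduct_sub_eq_zero_of_isSkewAdjoint (hs : Convex ℝ s)
    (hu : ∀ x ∈ s, DifferentiableAt ℝ u x)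
    (hskew : ∀ x ∈ s, LinearMap.IsSkewAdjoint (dotProductBilin ℝ ℝ) (fderiv ℝ u x))
    {x y : ι → ℝ} (hx : x ∈ s) (hy : y ∈ s) : (u y - u x) ⬝ᵥ (y - x) = 0 := by
  set d := y - x
  have hseg : ∀ t ∈ Set.Icc (0 : ℝ) 1, x + t • d ∈ s := fun t ht => hs.add_smul_sub_mem hx hy ht
  have hderiv : ∀ t ∈ Set.Icc (0 : ℝ) 1, HasDerivAt (fun t : ℝ => u (x + t • d) ⬝ᵥ d) 0 t := by
    intro t ht
    have hline : HasDerivAt (fun t : ℝ => x + t • d) d t := by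
      simpa using ((hasDerivAt_id t).smul_const d).const_add x
    refine (((hu _ (hseg t ht)).hasFDerivAt.comp_hasDerivAt t hline).dotProduct
      (hasDerivAt_const t d)).congr_deriv ?_
    linarith [dotProduct_zero (u (x + t • d)), ((hskew _ (hseg t ht)).apply_dotProduct d d)]
  obtain ⟨c, -, hslope⟩ := exists_hasDerivAt_eq_slope (fun t : ℝ => u (x + t • d) ⬝ᵥ d)
    (fun _ => 0) zero_lt_one (fun t ht => (hderiv t ht).continuousAt.continuousWithinAt)
    fun t ht => hderiv t (Set.Ioo_subset_Icc_self ht)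
  simp only [one_smul, zero_smul, add_zero, sub_zero, div_one, d, add_sub_cancel] at hslope
  rw [sub_dotProduct]
  linarith

theorem Convex.sub_eq_fderiv_apply_sub_of_isSkewAdjoint (hs : Convex ℝ s) (hs' : IsOpen s)
    (hu : ∀ x ∈ s, DifferentiableAt ℝ u x)
    (hskew : ∀ x ∈ s, LinearMap.IsSkewAdjoint (dotProductBilin ℝ ℝ) (fderiv ℝ u x))
    {x y : ι → ℝ} (hx : x ∈ s) (hy : y ∈ s) : u y - u x = fderiv ℝ u y (y - x) := by
  refine dotProduct_eq _ _ fun v => ?_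
  let ψ : ℝ → ℝ := fun t => (u (y + t • v) - u x) ⬝ᵥ (y + t • v - x)
  have hline : HasDerivAt (fun t : ℝ => y + t • v) v 0 := by
    simpa using ((hasDerivAt_id (0 : ℝ)).smul_const v).const_add y
  have hψ : HasDerivAt ψ ((u y - u x) ⬝ᵥ v + fderiv ℝ u y v ⬝ᵥ (y - x)) 0 := by
    refine ((((hu y hy).hasFDerivAt.comp_hasDerivAt_of_eq 0 hline (by simp)).sub_const
      (u x)).dotProduct (hline.sub_const x)).congr_deriv ?_
    simp only [zero_smul, add_zero, Function.comp_apply, add_comm]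
  have hψ_zero : ψ =ᶠ[𝓝 0] fun _ => 0 := by
    have hmem : ∀ᶠ t : ℝ in 𝓝 0, y + t • v ∈ s :=
      hline.continuousAt.preimage_mem_nhds (by simpa using hs'.mem_nhds hy)
    filter_upwards [hmem] with t ht
    exact hs.sub_dotProduct_sub_eq_zero_of_isSkewAdjoint hu hskew hx ht
  have hsum := hψ.unique ((hasDerivAt_const (0 : ℝ) (0 : ℝ)).congr_of_eventuallyEq hψ_zero)
  linarith [(hskew y hy).apply_dotProduct v (y - x)]

theorem Convex.fderiv_eq_of_isSkewAdjoint (hs : Convex ℝ s) (hs' : IsOpen s)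
    (hu : ∀ x ∈ s, DifferentiableAt ℝ u x)
    (hskew : ∀ x ∈ s, LinearMap.IsSkewAdjoint (dotProductBilin ℝ ℝ) (fderiv ℝ u x))
    {x y : ι → ℝ} (hx : x ∈ s) (hy : y ∈ s) : fderiv ℝ u x = fderiv ℝ u y := by
  set L := fderiv ℝ u y
  have hu_affine : u =ᶠ[𝓝 x] fun z => L z + (u y - L y) := by
    filter_upwards [hs'.mem_nhds hx] with z hz
    have := hs.sub_eq_fderiv_apply_sub_of_isSkewAdjoint hs' hu hskew hz hy
    rw [map_sub] at this
    linear_combination -this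
  exact hu_affine.fderiv_eq.trans (L.hasFDerivAt.add_const _).fderiv

end KillingField

theorem IsOpen.exists_eq_add_of_fderiv_eventuallyEq {E F : Type*}
    [NormedAddCommGroup E] [NormedSpace ℝ E] [NormedAddCommGroup F] [NormedSpace ℝ F]
    {f : E → F} {s : Set E} {x₀ : E} (hs : IsOpen s) (hs' : IsPreconnected s)
    (hf : DifferentiableOn ℝ f s) (hf' : ∀ x ∈ s, fderiv ℝ f =ᶠ[𝓝 x] fun _ => fderiv ℝ f x)
    (hx₀ : x₀ ∈ s) : ∃ c, ∀ x ∈ s, f x = fderiv ℝ f x₀ x + c := by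
  have hf'_diff : DifferentiableOn ℝ (fderiv ℝ f) s := fun x hx =>
    ((differentiableAt_const _).congr_of_eventuallyEq (hf' x hx)).differentiableWithinAt
  have hf'' : s.EqOn (fderiv ℝ (fderiv ℝ f)) 0 := fun x hx => by
    rw [(hf' x hx).fderiv_eq, fderiv_const_apply, Pi.zero_apply]
  obtain ⟨A, hA⟩ := hs.exists_is_const_of_fderiv_eq_zero hs' hf'_diff hf''
  obtain ⟨c, hc⟩ := hs.exists_eq_add_of_fderiv_eq hs' hf A.differentiable.differentiableOn
    fun x hx => by rw [hA x hx, A.fderiv]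
  exact ⟨c, fun x hx => by rw [hc hx, hA x₀ hx₀]⟩

/-- Killing fields of `ℝ³`: if `u` is a `C¹` vector field on a connected open set
`D ⊆ ℝ³` whose symmetric gradient `Du = (∇u + (∇u)ᵀ)/2` vanishes on `D`, then
`u(x) = η + ω × x` on `D` for some `η, ω ∈ ℝ³`. -/
theorem rigid_motion_of_symmetric_gradient_eq_zero (D : Set (Fin 3 → ℝ))
    (hDopen : IsOpen D) (hDconn : IsConnected D)
    (u : (Fin 3 → ℝ) → (Fin 3 → ℝ)) (hu : ContDiffOn ℝ 1 u D)
    (hsym : ∀ x ∈ D, ∀ i j : Fin 3,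
      fderiv ℝ (fun y => u y i) x (Pi.single j 1) +
        fderiv ℝ (fun y => u y j) x (Pi.single i 1) = 0) :
    ∃ η ω : Fin 3 → ℝ, ∀ x ∈ D, u x = η + crossProduct ω x := by
  have hdiff : ∀ x ∈ D, DifferentiableAt ℝ u x := fun x hx =>
    (hu.differentiableOn one_ne_zero).differentiableAt (hDopen.mem_nhds hx)
  have hskew : ∀ x ∈ D, LinearMap.IsSkewAdjoint (dotProductBilin ℝ ℝ) (fderiv ℝ u x) :=
    fun x hx => LinearMap.isSkewAdjoint_dotProductBilin_iff.2 fun i j => by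
      simpa [fderiv_apply (hdiff x hx)] using hsym x hx i j
  have hloc : ∀ x ∈ D, fderiv ℝ u =ᶠ[𝓝 x] fun _ => fderiv ℝ u x := by
    intro x hx
    obtain ⟨r, hr, hball⟩ := Metric.isOpen_iff.1 hDopen x hx
    filter_upwards [Metric.ball_mem_nhds x hr] with y hy
    exact (convex_ball x r).fderiv_eq_of_isSkewAdjoint Metric.isOpen_ball
      (fun z hz => hdiff z (hball hz)) (fun z hz => hskew z (hball hz)) hy
      (Metric.mem_ball_self hr)
  obtain ⟨x₀, hx₀⟩ := hDconn.nonempty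
  obtain ⟨η, hη⟩ := hDopen.exists_eq_add_of_fderiv_eventuallyEq hDconn.isPreconnected
    (fun x hx => (hdiff x hx).differentiableWithinAt) hloc hx₀
  obtain ⟨ω, hω⟩ := (hskew x₀ hx₀).exists_eq_cross (L := fderiv ℝ u x₀)
  exact ⟨η, ω, fun x hx => by rw [hη x hx, ← ContinuousLinearMap.coe_coe, hω, add_comm]⟩
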